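/- arXiv:2012.08363 — 2 statements merged into one kernel-verified Lean document; each statement's English description precedes it below -/
import Mathlib

section
/- Let k ∈ V be a nonzero null vector and (n, m, m̄) a Newman–Penrose tetrad adapted to k. Then the set of complex symmetric bilinear forms S on W satisfying the transversality condition S(k, v) = 0 for all v ∈ W is a complex subspace of dimension 6, and the six forms m⊙m, m̄⊙m̄, m⊙m̄, k⊙k, k⊙m, k⊙m̄ form a basis of this subspace; hence every transverse symmetric form a admits a unique expansion a = z₁ m⊙m + z₂ m̄⊙m̄ + z₃ m⊙m̄ + z₄ k⊙k + z₅ k⊙m + z₆ k⊙m̄ with z₁,…,z₆ ∈ ℂ. -/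
/-
Transversality and symmetry leave free exactly the values of a form on pairs from `n, m, m̄`,
and `(k, n, m, m̄)` is a basis of `W` whose Gram matrix pairs `k` with `n` and `m` with `m̄`.
Hence each of the six forms `m⊙m, …, k⊙m̄` is detected by exactly one of the six pairs
`(m̄, m̄), …, (n, m)`: evaluation there is a left inverse of the expansion map, which gives
linear independence and uniqueness, and checking on the basis shows that every transverse
symmetric form equals its expansion.
-/

open scoped TensorProduct
open Module

noncomputable section

variable {V : Type} [AddCommGroup V] [Module ℝ V]

/-- The complexification `W = ℂ ⊗ V` of the real vector space `V`. -/
abbrev Cx (V : Type) [AddCommGroup V] [Module ℝ V] := ℂ ⊗[ℝ] V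

/-- The canonical inclusion of `V` into its complexification `W = ℂ ⊗ V`. -/
def ι (v : V) : Cx V := (1 : ℂ) ⊗ₜ[ℝ] v

/-- Complex conjugation `u ↦ ū` on `W = ℂ ⊗ V` induced by the real structure. -/
def conjW : Cx V →ₗ[ℝ] Cx V :=
  TensorProduct.map Complex.conjAe.toLinearMap LinearMap.id

lemma conjW_smul (c : ℂ) (u : Cx V) :
    conjW (c • u) = (starRingEnd ℂ c) • conjW u := by
  induction u using TensorProduct.induction_on with
  | zero => simp
  | tmul x v =>
      simp [conjW, TensorProduct.smul_tmul', smul_eq_mul, map_mul, TensorProduct.map_tmul]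
  | add a b ha hb => simp [smul_add, map_add, ha, hb]

/-- The ℂ-bilinear extension of `g` to `W = ℂ ⊗ V`. -/
def gW (g : LinearMap.BilinForm ℝ V) : LinearMap.BilinForm ℂ (Cx V) :=
  g.baseChange ℂ

/-- The symmetric product `u ⊙ v`, as a complex bilinear form on `W`:
`(u ⊙ v)(a,b) = (1/2) (g(u,a) g(v,b) + g(v,a) g(u,b))`. -/
def sprod (g : LinearMap.BilinForm ℝ V) (u v : Cx V) : LinearMap.BilinForm ℂ (Cx V) :=
  LinearMap.mk₂ ℂ
    (fun a b => (1 / 2 : ℂ) * (gW g u a * gW g v b + gW g v a * gW g u b))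
    (by intro a a' b; simp only [map_add]; ring)
    (by intro c a b; simp only [map_smul, smul_eq_mul]; ring)
    (by intro a b b'; simp only [map_add]; ring)
    (by intro a c b; simp only [map_smul, smul_eq_mul]; ring)

/-- The symmetric product with a fixed vector, as a linear map `b ↦ u ⊙ b`. -/
def sprodL (g : LinearMap.BilinForm ℝ V) (u : Cx V) :
    Cx V →ₗ[ℂ] LinearMap.BilinForm ℂ (Cx V) where
  toFun v := sprod g u v
  map_add' v v' := by
    refine LinearMap.ext fun a => LinearMap.ext fun b => ?_
    simp only [sprod, LinearMap.mk₂_apply, LinearMap.add_apply, map_add]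
    ring
  map_smul' c v := by
    refine LinearMap.ext fun a => LinearMap.ext fun b => ?_
    simp only [sprod, LinearMap.mk₂_apply, LinearMap.smul_apply, map_smul, smul_eq_mul,
      RingHom.id_apply]
    ring

/-- The conjugate form `ā` of a complex bilinear form `a` on `W`:
`ā(u,v) = conj (a(ū, v̄))`. -/
def conjForm (a : LinearMap.BilinForm ℂ (Cx V)) : LinearMap.BilinForm ℂ (Cx V) :=
  LinearMap.mk₂ ℂ (fun u v => starRingEnd ℂ (a (conjW u) (conjW v)))
    (by intro u u' v; simp only [map_add, LinearMap.add_apply])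
    (by intro c u v; simp only [conjW_smul, map_smul, LinearMap.smul_apply, smul_eq_mul,
          map_mul, Complex.conj_conj])
    (by intro u v v'; simp only [map_add])
    (by intro u c v; simp only [conjW_smul, map_smul, LinearMap.smul_apply, smul_eq_mul,
          map_mul, Complex.conj_conj])

/-- A Newman–Penrose tetrad `(k, n, m, m̄)` adapted to a nonzero null `k ∈ V`:
all the orthogonality relations of the tetrad. -/
def IsNPTetrad (g : LinearMap.BilinForm ℝ V) (k n : V) (m : Cx V) : Prop :=
  gW g m (conjW m) = 1 ∧ gW g (ι k) (ι n) = -1 ∧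
    gW g (ι k) (ι k) = 0 ∧ gW g (ι n) (ι n) = 0 ∧
    gW g m m = 0 ∧ gW g (conjW m) (conjW m) = 0 ∧
    gW g (ι k) m = 0 ∧ gW g (ι k) (conjW m) = 0 ∧
    gW g (ι n) m = 0 ∧ gW g (ι n) (conjW m) = 0

variable [FiniteDimensional ℝ V]

/-- The `g`-associated endomorphism `Ŝ` of a bilinear form `S` on `W`, characterized by
`g(Ŝ a, b) = S(a, b)` (defined when the extension of `g` to `W` is nondegenerate, which
holds whenever `g` is nondegenerate). -/
def hatEnd (g : LinearMap.BilinForm ℝ V) (S : LinearMap.BilinForm ℂ (Cx V)) :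
    Cx V →ₗ[ℂ] Cx V :=
  letI := Classical.dec ((gW g).Nondegenerate)
  if hnd : (gW g).Nondegenerate then ((gW g).toDual hnd).symm.toLinearMap ∘ₗ S else 0

/-- The metric trace `tr_g S` of a bilinear form `S` on `W`. -/
def trg (g : LinearMap.BilinForm ℝ V) (S : LinearMap.BilinForm ℂ (Cx V)) : ℂ :=
  LinearMap.trace ℂ (Cx V) (hatEnd g S)

/-- The full metric contraction `⟨A, B⟩ = tr (Â ∘ B̂)` of bilinear forms on `W`. -/
def contr (g : LinearMap.BilinForm ℝ V) (A B : LinearMap.BilinForm ℂ (Cx V)) : ℂ :=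
  LinearMap.trace ℂ (Cx V) (hatEnd g A ∘ₗ hatEnd g B)

/-- The value `D[k](S)(u,v)` of the symbol operator `D[k]` on a bilinear form `S`. -/
def Dval (g : LinearMap.BilinForm ℝ V) (k : V) (S : LinearMap.BilinForm ℂ (Cx V))
    (u v : Cx V) : ℂ :=
  (1 / 2 : ℂ) *
    (gW g (ι k) (ι k) * S u v - gW g (ι k) (ι k) * gW g u v * trg g S
      + gW g (ι k) u * gW g (ι k) v * trg g S + gW g u v * S (ι k) (ι k)
      - gW g (ι k) u * S (ι k) v - gW g (ι k) v * S (ι k) u)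

/-- The symbol operator `D[k]`, acting on bilinear forms on `W`. -/
def Dop (g : LinearMap.BilinForm ℝ V) (k : V) (S : LinearMap.BilinForm ℂ (Cx V)) :
    LinearMap.BilinForm ℂ (Cx V) :=
  LinearMap.mk₂ ℂ (fun u v => Dval g k S u v)
    (by intro u u' v; simp only [Dval, map_add, LinearMap.add_apply]; ring)
    (by intro c u v; simp only [Dval, map_smul, LinearMap.smul_apply, smul_eq_mul]; ring)
    (by intro u v v'; simp only [Dval, map_add, LinearMap.add_apply]; ring)
    (by intro u c v; simp only [Dval, map_smul, LinearMap.smul_apply, smul_eq_mul]; ring)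


theorem Function.LeftInverse.linearIndependent {ι R M : Type*} [Fintype ι] [Semiring R]
    [AddCommMonoid M] [Module R M] {v : ι → M} {c : M → ι → R}
    (hc : Function.LeftInverse c fun z => ∑ i, z i • v i) : LinearIndependent R v :=
  Fintype.linearIndependent_iffₛ.2 fun _ _ h => congrFun (hc.injective h)

section Tetrad

variable {E : Type} [AddCommGroup E] [Module ℝ E] {g : LinearMap.BilinForm ℝ E}
  {k n : E} {m : Cx E}

lemma gW_comm (hg : g.IsSymm) (u v : Cx E) : gW g u v = gW g v u :=
  (LinearMap.BilinForm.IsSymm.baseChange (A := ℂ) (LinearMap.BilinForm.isSymm_iff.1 hg)).eq u v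

lemma sprod_apply (u v a b : Cx E) :
    sprod g u v a b = (1 / 2 : ℂ) * (gW g u a * gW g v b + gW g v a * gW g u b) := rfl

lemma IsNPTetrad.gram (hg : g.IsSymm) (ht : IsNPTetrad g k n m) :
    (gW g (ι k) (ι k) = 0 ∧ gW g (ι k) (ι n) = -1 ∧
      gW g (ι k) m = 0 ∧ gW g (ι k) (conjW m) = 0) ∧
    (gW g (ι n) (ι k) = -1 ∧ gW g (ι n) (ι n) = 0 ∧
      gW g (ι n) m = 0 ∧ gW g (ι n) (conjW m) = 0) ∧
    (gW g m (ι k) = 0 ∧ gW g m (ι n) = 0 ∧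
      gW g m m = 0 ∧ gW g m (conjW m) = 1) ∧
    (gW g (conjW m) (ι k) = 0 ∧ gW g (conjW m) (ι n) = 0 ∧
      gW g (conjW m) m = 1 ∧ gW g (conjW m) (conjW m) = 0) := by
  obtain ⟨hmm', hkn, hkk, hnn, hmm, hm'm', hkm, hkm', hnm, hnm'⟩ := ht
  rw [gW_comm hg (ι n) (ι k), gW_comm hg m (ι k), gW_comm hg m (ι n),
    gW_comm hg (conjW m) (ι k), gW_comm hg (conjW m) (ι n), gW_comm hg (conjW m) m]
  exact ⟨⟨hkk, hkn, hkm, hkm'⟩, ⟨hkn, hnn, hnm, hnm'⟩, ⟨hkm, hnm, hmm, hmm'⟩,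
    ⟨hkm', hnm', hmm', hm'm'⟩⟩

def npFrame (k n : E) (m : Cx E) : Fin 4 → Cx E := ![ι k, ι n, m, conjW m]

-- `(-n, -k, m̄, m)` is the frame dual to `(k, n, m, m̄)` under `g`.
def npFrameCoords (g : LinearMap.BilinForm ℝ E) (k n : E) (m x : Cx E) : Fin 4 → ℂ :=
  ![-gW g (ι n) x, -gW g (ι k) x, gW g (conjW m) x, gW g m x]

lemma IsNPTetrad.leftInverse_npFrameCoords (hg : g.IsSymm) (ht : IsNPTetrad g k n m) :
    Function.LeftInverse (npFrameCoords g k n m) fun z => ∑ i, z i • npFrame k n m i := by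
  intro z
  funext i
  fin_cases i <;>
    simp [npFrameCoords, npFrame, Fin.sum_univ_four, ht.gram hg]

lemma IsNPTetrad.linearIndependent_npFrame (hg : g.IsSymm) (ht : IsNPTetrad g k n m) :
    LinearIndependent ℂ (npFrame k n m) :=
  (ht.leftInverse_npFrameCoords hg).linearIndependent

def npForms (g : LinearMap.BilinForm ℝ E) (k : E) (m : Cx E) :
    Fin 6 → LinearMap.BilinForm ℂ (Cx E) :=
  ![sprod g m m, sprod g (conjW m) (conjW m), sprod g m (conjW m),
    sprod g (ι k) (ι k), sprod g (ι k) m, sprod g (ι k) (conjW m)]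

-- Each of the six forms is the only one not vanishing at the corresponding pair
-- `(m̄, m̄), (m, m), (m, m̄), (n, n), (n, m̄), (n, m)`;
-- the factors normalize its value there to `1`.
def npCoeffs (n : E) (m : Cx E) (S : LinearMap.BilinForm ℂ (Cx E)) : Fin 6 → ℂ :=
  ![S (conjW m) (conjW m), S m m, 2 * S m (conjW m),
    S (ι n) (ι n), -2 * S (ι n) (conjW m), -2 * S (ι n) m]

lemma IsNPTetrad.leftInverse_npCoeffs (hg : g.IsSymm) (ht : IsNPTetrad g k n m) :
    Function.LeftInverse (npCoeffs n m) fun z => ∑ i, z i • npForms g k m i := by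
  intro z
  funext i
  fin_cases i <;>
    simp [npCoeffs, npForms, Fin.sum_univ_six, sprod_apply, ht.gram hg] <;> ring

lemma IsNPTetrad.linearIndependent_npForms (hg : g.IsSymm) (ht : IsNPTetrad g k n m) :
    LinearIndependent ℂ (npForms g k m) :=
  (ht.leftInverse_npCoeffs hg).linearIndependent

def transverseSymm (k : E) : Submodule ℂ (LinearMap.BilinForm ℂ (Cx E)) where
  carrier := {S | S.IsSymm ∧ ∀ v, S (ι k) v = 0}
  add_mem' := fun ⟨hS, hSk⟩ ⟨hT, hTk⟩ => ⟨hS.add hT, fun v => by simp [hSk, hTk]⟩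
  zero_mem' := ⟨LinearMap.BilinForm.isSymm_zero, fun _ => rfl⟩
  smul_mem' := fun c _ ⟨hS, hSk⟩ => ⟨hS.smul c, fun v => by simp [hSk]⟩

lemma sprod_mem_transverseSymm {u v : Cx E} (hu : gW g u (ι k) = 0) (hv : gW g v (ι k) = 0) :
    sprod g u v ∈ transverseSymm k :=
  ⟨⟨fun a b => by simp only [sprod_apply]; ring⟩,
    fun a => by simp [sprod_apply, hu, hv]⟩

lemma IsNPTetrad.span_npForms_le (hg : g.IsSymm) (ht : IsNPTetrad g k n m) :
    Submodule.span ℂ (Set.range (npForms g k m)) ≤ transverseSymm k := by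
  obtain ⟨⟨hkk, -⟩, -, ⟨hmk, -⟩, ⟨hm'k, -⟩⟩ := ht.gram hg
  rw [Submodule.span_le, Set.range_subset_iff]
  intro i
  fin_cases i <;>
    exact sprod_mem_transverseSymm (by assumption) (by assumption)

lemma IsNPTetrad.eq_sum_npCoeffs (hg : g.IsSymm) (ht : IsNPTetrad g k n m)
    (hdim : finrank ℝ E = 4) {S : LinearMap.BilinForm ℂ (Cx E)} (hS : S ∈ transverseSymm k) :
    S = ∑ i, npCoeffs n m S i • npForms g k m i := by
  obtain ⟨hSsymm, hSk⟩ := hS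
  have hSk' (v : Cx E) : S v (ι k) = 0 := hSsymm.eq (ι k) v ▸ hSk v
  let b := basisOfLinearIndependentOfCardEqFinrank (ht.linearIndependent_npFrame hg)
    (by simp [hdim])
  refine LinearMap.BilinForm.ext_basis b fun i j => ?_
  rw [coe_basisOfLinearIndependentOfCardEqFinrank]
  fin_cases i <;> fin_cases j <;>
    simp [npFrame, npCoeffs, npForms, Fin.sum_univ_six, sprod_apply, ht.gram hg, hSk, hSk',
      hSsymm.eq m (ι n), hSsymm.eq (conjW m) (ι n), hSsymm.eq (conjW m) m] <;> ring

lemma IsNPTetrad.span_npForms (hg : g.IsSymm) (ht : IsNPTetrad g k n m)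
    (hdim : finrank ℝ E = 4) :
    Submodule.span ℂ (Set.range (npForms g k m)) = transverseSymm k := by
  refine le_antisymm (ht.span_npForms_le hg) fun S hS => ?_
  rw [ht.eq_sum_npCoeffs hg hdim hS]
  exact Submodule.sum_mem _ fun i _ => Submodule.smul_mem _ _ (Submodule.subset_span ⟨i, rfl⟩)

end Tetrad

theorem statement_7_general (g : LinearMap.BilinForm ℝ V) (hdim : finrank ℝ V = 4)
    (hsymm : g.IsSymm)
    (k n : V) (m : Cx V)
    (htetrad : IsNPTetrad g k n m) :
    {S : LinearMap.BilinForm ℂ (Cx V) | S.IsSymm ∧ ∀ v, S (ι k) v = 0}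
        = ↑(Submodule.span ℂ (Set.range
            ![sprod g m m, sprod g (conjW m) (conjW m), sprod g m (conjW m),
              sprod g (ι k) (ι k), sprod g (ι k) m, sprod g (ι k) (conjW m)])) ∧
      LinearIndependent ℂ
          ![sprod g m m, sprod g (conjW m) (conjW m), sprod g m (conjW m),
            sprod g (ι k) (ι k), sprod g (ι k) m, sprod g (ι k) (conjW m)] ∧
      finrank ℂ ↥(Submodule.span ℂ (Set.range
            ![sprod g m m, sprod g (conjW m) (conjW m), sprod g m (conjW m),
              sprod g (ι k) (ι k), sprod g (ι k) m, sprod g (ι k) (conjW m)])) = 6 ∧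
      ∀ a : LinearMap.BilinForm ℂ (Cx V), a.IsSymm → (∀ v, a (ι k) v = 0) →
        ∃! z : Fin 6 → ℂ,
          a = z 0 • sprod g m m + z 1 • sprod g (conjW m) (conjW m)
              + z 2 • sprod g m (conjW m) + z 3 • sprod g (ι k) (ι k)
              + z 4 • sprod g (ι k) m + z 5 • sprod g (ι k) (conjW m) := by
  have hli : LinearIndependent ℂ (npForms g k m) := htetrad.linearIndependent_npForms hsymm
  refine ⟨congrArg SetLike.coe (htetrad.span_npForms hsymm hdim).symm, hli,
    (finrank_span_eq_card hli).trans (Fintype.card_fin 6), fun a ha hak => ?_⟩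
  have hsum (z : Fin 6 → ℂ) : ∑ i, z i • npForms g k m i =
      z 0 • sprod g m m + z 1 • sprod g (conjW m) (conjW m)
        + z 2 • sprod g m (conjW m) + z 3 • sprod g (ι k) (ι k)
        + z 4 • sprod g (ι k) m + z 5 • sprod g (ι k) (conjW m) :=
    Fin.sum_univ_six _
  simp only [← hsum]
  refine ⟨npCoeffs n m a, htetrad.eq_sum_npCoeffs hsymm hdim ⟨ha, hak⟩, fun z hz => ?_⟩
  rw [hz, htetrad.leftInverse_npCoeffs hsymm z]

/-- The transverse symmetric forms (`S(k,·) = 0`) form a 6-dimensional complex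
subspace with basis `m⊙m, m̄⊙m̄, m⊙m̄, k⊙k, k⊙m, k⊙m̄`; every transverse symmetric
form has a unique expansion in these six forms. -/
theorem statement_7 (g : LinearMap.BilinForm ℝ V) (hdim : finrank ℝ V = 4)
    (hg : g.Nondegenerate) (hsymm : g.IsSymm)
    (k n : V) (m : Cx V) (hk : k ≠ 0) (hknull : g k k = 0)
    (htetrad : IsNPTetrad g k n m) :
    {S : LinearMap.BilinForm ℂ (Cx V) | S.IsSymm ∧ ∀ v, S (ι k) v = 0}
        = ↑(Submodule.span ℂ (Set.range
            ![sprod g m m, sprod g (conjW m) (conjW m), sprod g m (conjW m),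
              sprod g (ι k) (ι k), sprod g (ι k) m, sprod g (ι k) (conjW m)])) ∧
      LinearIndependent ℂ
          ![sprod g m m, sprod g (conjW m) (conjW m), sprod g m (conjW m),
            sprod g (ι k) (ι k), sprod g (ι k) m, sprod g (ι k) (conjW m)] ∧
      finrank ℂ ↥(Submodule.span ℂ (Set.range
            ![sprod g m m, sprod g (conjW m) (conjW m), sprod g m (conjW m),
              sprod g (ι k) (ι k), sprod g (ι k) m, sprod g (ι k) (conjW m)])) = 6 ∧
      ∀ a : LinearMap.BilinForm ℂ (Cx V), a.IsSymm → (∀ v, a (ι k) v = 0) →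
        ∃! z : Fin 6 → ℂ,
          a = z 0 • sprod g m m + z 1 • sprod g (conjW m) (conjW m)
              + z 2 • sprod g m (conjW m) + z 3 • sprod g (ι k) (ι k)
              + z 4 • sprod g (ι k) m + z 5 • sprod g (ι k) (conjW m) :=
  statement_7_general g hdim hsymm k n m htetrad

end
end

section
/- Let k ∈ V be a nonzero null vector and (n, m, m̄) a Newman–Penrose tetrad adapted to k. If S is a complex symmetric bilinear form on W with D[k](S) = 0, then S(k,k) = 0, S(k,m) = 0, S(k,m̄) = 0, S(m,m̄) = 0, and tr_g S = −2 S(k,n). -/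
open scoped TensorProduct
open Module

/-! Since `k` is null, `D[k](S)(u,v) = ½ (g(k,u) g(k,v) tr_g S + g(u,v) S(k,k) − g(k,u) S(k,v)
− g(k,v) S(k,u))`. Evaluating it at `(m, m̄)`, `(n, m)`, `(n, m̄)` and `(n, n)` gives the first
three identities and `tr_g S = −2 S(k,n)`. On the other hand `(k, n, m, m̄)` is a basis of `W`
with `g`-dual basis `(−n, −k, m̄, m)`, so `tr_g S = −2 S(k,n) + 2 S(m,m̄)`, whence `S(m,m̄) = 0`. -/

open LinearMap (BilinForm)

namespace LinearMap.BilinForm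

variable {K M ι : Type*} [Field K] [AddCommGroup M] [Module K M] [DecidableEq ι]

def IsDualPair (B : BilinForm K M) (b c : ι → M) : Prop :=
  ∀ i j, B (b i) (c j) = if i = j then 1 else 0

namespace IsDualPair

variable [Fintype ι] {B : BilinForm K M} {b c : ι → M}

lemma apply_sum_smul (h : IsDualPair B b c) (a : ι → K) (j : ι) :
    B (∑ i, a i • b i) (c j) = a j := by
  simp [h _ j]

lemma linearIndependent (h : IsDualPair B b c) : LinearIndependent K b := by
  refine Fintype.linearIndependent_iff.2 fun a ha j => ?_
  simpa [ha] using (h.apply_sum_smul a j).symm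

lemma repr_apply {e : Basis ι K M} (h : IsDualPair B e c) (x : M) (i : ι) :
    e.repr x i = B x (c i) := by
  conv_rhs => rw [← e.sum_repr x]
  exact (h.apply_sum_smul _ i).symm

lemma separatingLeft {e : Basis ι K M} (h : IsDualPair B e c) : B.SeparatingLeft := by
  intro x hx
  refine e.repr.injective (Finsupp.ext fun i => ?_)
  simp [h.repr_apply, hx]

lemma trace_eq_sum {e : Basis ι K M} (h : IsDualPair B e c) (f : M →ₗ[K] M) :
    LinearMap.trace K M f = ∑ i, B (f (e i)) (c i) := by
  simp [LinearMap.trace_eq_matrix_trace K e, Matrix.trace, LinearMap.toMatrix_apply,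
    h.repr_apply]

end IsDualPair

end LinearMap.BilinForm

section

variable {V : Type} [AddCommGroup V] [Module ℝ V]

lemma gW_isSymm {g : BilinForm ℝ V} (hsymm : g.IsSymm) : (gW g).IsSymm :=
  BilinForm.isSymm_iff.2 (BilinForm.IsSymm.baseChange ℂ (BilinForm.isSymm_iff.1 hsymm))

lemma IsNPTetrad.isDualPair {g : BilinForm ℝ V} {k n : V} {m : Cx V} (hsymm : g.IsSymm)
    (h : IsNPTetrad g k n m) :
    (gW g).IsDualPair ![ι k, ι n, m, conjW m] ![-ι n, -ι k, conjW m, m] := by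
  obtain ⟨hmm', hkn, hkk, hnn, hmm, hm'm', hkm, hkm', hnm, hnm'⟩ := h
  have hW := gW_isSymm hsymm
  have hnk : gW g (ι n) (ι k) = -1 := by rw [hW.eq, hkn]
  have hmk : gW g m (ι k) = 0 := by rw [hW.eq, hkm]
  have hmn : gW g m (ι n) = 0 := by rw [hW.eq, hnm]
  have hm'k : gW g (conjW m) (ι k) = 0 := by rw [hW.eq, hkm']
  have hm'n : gW g (conjW m) (ι n) = 0 := by rw [hW.eq, hnm']
  have hm'm : gW g (conjW m) m = 1 := by rw [hW.eq, hmm']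
  intro i j
  fin_cases i <;> fin_cases j <;> simp [*]

end

section

variable {V : Type} [AddCommGroup V] [Module ℝ V] [FiniteDimensional ℝ V]

lemma gW_hatEnd_apply {g : BilinForm ℝ V} (hnd : (gW g).Nondegenerate)
    (S : BilinForm ℂ (Cx V)) (a w : Cx V) : gW g (hatEnd g S a) w = S a w := by
  rw [hatEnd, dif_pos hnd]
  exact BilinForm.apply_toDual_symm_apply (hB := hnd) (S a) w

lemma trg_eq_sum_of_isDualPair {g : BilinForm ℝ V} (hsymm : g.IsSymm) {ι : Type*} [Fintype ι]
    [DecidableEq ι] {e : Basis ι ℂ (Cx V)} {c : ι → Cx V} (h : (gW g).IsDualPair e c)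
    (S : BilinForm ℂ (Cx V)) : trg g S = ∑ i, S (e i) (c i) := by
  have hnd : (gW g).Nondegenerate :=
    (gW_isSymm hsymm).isRefl.nondegenerate_iff_separatingLeft.2 h.separatingLeft
  simp [trg, h.trace_eq_sum, gW_hatEnd_apply hnd]

lemma IsNPTetrad.trg_eq {g : BilinForm ℝ V} {k n : V} {m : Cx V} (hdim : finrank ℝ V = 4)
    (hsymm : g.IsSymm) (h : IsNPTetrad g k n m) (S : BilinForm ℂ (Cx V)) :
    trg g S = -S (ι k) (ι n) - S (ι n) (ι k) + S m (conjW m) + S (conjW m) m := by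
  have hdual := h.isDualPair hsymm
  have hcard : Fintype.card (Fin 4) = finrank ℂ (Cx V) := by
    rw [Module.finrank_baseChange, hdim, Fintype.card_fin]
  rw [← coe_basisOfLinearIndependentOfCardEqFinrank hdual.linearIndependent hcard] at hdual
  rw [trg_eq_sum_of_isDualPair hsymm hdual, Fin.sum_univ_four]
  simp only [coe_basisOfLinearIndependentOfCardEqFinrank, Matrix.cons_val, map_neg]
  ring

theorem statement_8_general (g : LinearMap.BilinForm ℝ V) (hdim : finrank ℝ V = 4)
    (hsymm : g.IsSymm)
    (k n : V) (m : Cx V)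
    (htetrad : IsNPTetrad g k n m)
    (S : LinearMap.BilinForm ℂ (Cx V)) (hS : S.IsSymm)
    (hker : ∀ u v : Cx V, Dval g k S u v = 0) :
    S (ι k) (ι k) = 0 ∧ S (ι k) m = 0 ∧ S (ι k) (conjW m) = 0 ∧
      S m (conjW m) = 0 ∧ trg g S = -2 * S (ι k) (ι n) := by
  have htr_tetrad := htetrad.trg_eq hdim hsymm S
  obtain ⟨hmm', hkn, hkk, hnn, -, -, hkm, hkm', hnm, hnm'⟩ := htetrad
  have hDmm' := hker m (conjW m)
  have hDnm := hker (ι n) m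
  have hDnm' := hker (ι n) (conjW m)
  have hDnn := hker (ι n) (ι n)
  simp only [Dval, hmm', hkn, hkk, hnn, hkm, hkm', hnm, hnm'] at hDmm' hDnm hDnm' hDnn
  have htr : trg g S = -2 * S (ι k) (ι n) := by linear_combination 2 * hDnn
  refine ⟨by linear_combination 2 * hDmm', by linear_combination 2 * hDnm,
    by linear_combination 2 * hDnm', ?_, htr⟩
  linear_combination (1 / 2 : ℂ) * htr - (1 / 2 : ℂ) * htr_tetrad
    - (1 / 2 : ℂ) * hS.eq (ι k) (ι n) + (1 / 2 : ℂ) * hS.eq m (conjW m)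

/-- If `D[k](S) = 0` for a symmetric form `S`, then `S(k,k) = S(k,m) = S(k,m̄) =
S(m,m̄) = 0` and `tr_g S = −2 S(k,n)`. -/
theorem statement_8 (g : LinearMap.BilinForm ℝ V) (hdim : finrank ℝ V = 4)
    (hg : g.Nondegenerate) (hsymm : g.IsSymm)
    (k n : V) (m : Cx V) (hk : k ≠ 0) (hknull : g k k = 0)
    (htetrad : IsNPTetrad g k n m)
    (S : LinearMap.BilinForm ℂ (Cx V)) (hS : S.IsSymm)
    (hker : ∀ u v : Cx V, Dval g k S u v = 0) :
    S (ι k) (ι k) = 0 ∧ S (ι k) m = 0 ∧ S (ι k) (conjW m) = 0 ∧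
      S m (conjW m) = 0 ∧ trg g S = -2 * S (ι k) (ι n) :=
  statement_8_general g hdim hsymm k n m htetrad S hS hker

end
end
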